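/- arXiv:2409.12200 — 4 statements merged into one kernel-verified Lean document; each statement's English description precedes it below -/
import Mathlib

section
/- Let V be a 4-dimensional real vector space, h a symmetric bilinear form of signature (0,1,1,1) with radical spanned by the nonzero vector ξ, and t ∈ V* a covector with t(ξ)=1. Then there is a unique symmetric bilinear form ĥ on V* such that ĥ(t,·)=0 and such that the composite map V → V* → V given by v ↦ ĥ(h(v,·),·)† equals v ↦ v − t(v)·ξ (i.e. h followed by ĥ is the projection δ − t⊗ξ). -/
/-- Signature (0,1,1,1). -/
def IsSig0111 {V : Type*} [AddCommGroup V] [Module ℝ V]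
    (h : V →ₗ[ℝ] V →ₗ[ℝ] ℝ) : Prop :=
  ∃ ζ : Fin 4 → V, LinearIndependent ℝ ζ ∧
    ∀ i j, h (ζ i) (ζ j) = if i = j ∧ i ≠ 0 then 1 else 0

/-
Since `t ξ = 1`, `V = ker t ⊕ ℝ ξ` and `ξ` spans the radical of `h`, so `h` restricts to a
nondegenerate form on `ker t`. Let `L σ ∈ ker t` be the vector with `h (L σ) w = σ w` for
`w ∈ ker t`; then `ĥ σ τ = τ (L σ)` is the required form, symmetric because `h` is.
Uniqueness holds because every covector is `σ ξ • t + h (L σ)`.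
-/

open Module LinearMap Submodule

section

variable {K V : Type*} [Field K] [AddCommGroup V] [Module K V]

theorem isCompl_ker_span_singleton_of_apply_eq_one {t : Dual K V} {ξ : V} (htξ : t ξ = 1) :
    IsCompl (ker t) (K ∙ ξ) :=
  isCompl_span_singleton_of_isCoatom_of_notMem
    (isCoatom_ker_of_surjective (surjective_of_ne_zero (by rintro rfl; simp at htξ)))
    (by simp [htξ])

section DualLift

variable [FiniteDimensional K V] {h : V →ₗ[K] V →ₗ[K] K} {W : Submodule K V}

noncomputable def dualLift (hW : (h.domRestrict₁₂ W W).Nondegenerate) : Dual K V →ₗ[K] V :=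
  W.subtype ∘ₗ (BilinForm.toDual _ hW).symm.toLinearMap ∘ₗ W.dualRestrict

variable (hW : (h.domRestrict₁₂ W W).Nondegenerate)

theorem dualLift_mem (σ : Dual K V) : dualLift hW σ ∈ W :=
  Subtype.prop _

theorem dualLift_apply_of_mem (σ : Dual K V) {w : V} (hw : w ∈ W) :
    h (dualLift hW σ) w = σ w :=
  BilinForm.apply_toDual_symm_apply (hB := hW) (W.dualRestrict σ) ⟨w, hw⟩

theorem dualLift_eq_of_forall {σ : Dual K V} {v : V} (hv : v ∈ W)
    (hvσ : ∀ w ∈ W, h v w = σ w) : dualLift hW σ = v := by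
  suffices (BilinForm.toDual _ hW).symm (W.dualRestrict σ) = ⟨v, hv⟩ from
    congrArg Subtype.val this
  rw [LinearEquiv.symm_apply_eq]
  ext ⟨w, hw⟩
  exact (hvσ w hw).symm

theorem apply_dualLift_comm (hh : h.IsSymm) (σ τ : Dual K V) :
    τ (dualLift hW σ) = σ (dualLift hW τ) :=
  calc τ (dualLift hW σ) = h (dualLift hW τ) (dualLift hW σ) :=
        (dualLift_apply_of_mem hW τ (dualLift_mem hW σ)).symm
    _ = h (dualLift hW σ) (dualLift hW τ) := hh.eq _ _
    _ = σ (dualLift hW τ) := dualLift_apply_of_mem hW σ (dualLift_mem hW τ)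

end DualLift

section Radical

variable [FiniteDimensional K V] {h : V →ₗ[K] V →ₗ[K] K} {ξ : V} {t : Dual K V}
  (hW : (h.domRestrict₁₂ (ker t) (ker t)).Nondegenerate)

theorem dualLift_apply_eq_sub_smul (hξ : h ξ = 0) (htξ : t ξ = 1) (v : V) :
    dualLift hW (h v) = v - t v • ξ :=
  dualLift_eq_of_forall hW (by simp [htξ]) fun w _ => by simp [hξ]

theorem eq_smul_add_dualLift (hh : h.IsSymm) (hξ : h ξ = 0) (htξ : t ξ = 1) (σ : Dual K V) :
    σ = σ ξ • t + h (dualLift hW σ) := by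
  ext v
  have hvξ : v - t v • ξ ∈ ker t := by simp [htξ]
  have hLξ : h (dualLift hW σ) ξ = 0 := by rw [← hh.eq, hξ]; rfl
  have hσ : h (dualLift hW σ) v = σ v - t v * σ ξ := by
    simpa [hLξ] using dualLift_apply_of_mem hW σ hvξ
  simp only [LinearMap.add_apply, LinearMap.smul_apply, smul_eq_mul, hσ]
  ring

end Radical

theorem existsUnique_dual_form_of_ker_eq_span [FiniteDimensional K V]
    {h : V →ₗ[K] V →ₗ[K] K} (hh : h.IsSymm) {ξ : V} (hker : ker h = K ∙ ξ)
    {t : Dual K V} (htξ : t ξ = 1) :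
    ∃! hhat : Dual K V →ₗ[K] Dual K V →ₗ[K] K,
      (∀ σ τ, hhat σ τ = hhat τ σ) ∧ (∀ σ, hhat t σ = 0) ∧
      (∀ v σ, hhat (h v) σ = σ v - t v * σ ξ) := by
  have hW := hh.nondegenerate_restrict_of_isCompl_ker
    (hker ▸ isCompl_ker_span_singleton_of_apply_eq_one htξ)
  have hξ : h ξ = 0 := by rw [← mem_ker, hker]; exact mem_span_singleton_self ξ
  have hLt : dualLift hW t = 0 :=
    dualLift_eq_of_forall hW (zero_mem _) fun w hw => by simpa using hw.symm
  refine ⟨Dual.eval K V ∘ₗ dualLift hW,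
    ⟨apply_dualLift_comm hW hh, fun σ => ?_, fun v σ => ?_⟩, ?_⟩
  · simp [hLt]
  · simp [dualLift_apply_eq_sub_smul hW hξ htξ]
  · rintro g ⟨-, hgt, hgh⟩
    ext σ τ
    have hLσ : t (dualLift hW σ) = 0 := dualLift_mem hW σ
    calc g σ τ = g (σ ξ • t + h (dualLift hW σ)) τ := by
          rw [← eq_smul_add_dualLift hW hh hξ htξ σ]
      _ = τ (dualLift hW σ) := by simp [hgt, hgh, hLσ]

section DegenerateOrthonormalBasis

variable {ι : Type*} [DecidableEq ι] {h : V →ₗ[K] V →ₗ[K] K} (b : Basis ι K V)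
  {i₀ : ι}

theorem isSymm_of_basis
    (hb : ∀ i j, h (b i) (b j) = if i = j ∧ i ≠ i₀ then 1 else 0) :
    h.IsSymm :=
  isSymm_iff_eq_flip.2 <| ext_basis b b fun i j => by
    by_cases hij : i = j
    · rw [hij]; rfl
    · simp [hb, hij, Ne.symm hij]

theorem flip_apply_basis_eq_coord
    (hb : ∀ i j, h (b i) (b j) = if i = j ∧ i ≠ i₀ then 1 else 0)
    {j : ι} (hj : j ≠ i₀) : h.flip (b j) = b.coord j :=
  b.ext fun i => by by_cases hij : i = j <;> simp [hb, hij, hj]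

theorem ker_eq_span_basis
    (hb : ∀ i j, h (b i) (b j) = if i = j ∧ i ≠ i₀ then 1 else 0) :
    ker h = K ∙ b i₀ := by
  refine le_antisymm (fun v hv => ?_) ?_
  · have hcoord (j : ι) (hj : j ≠ i₀) : b.repr v j = 0 := by
      rw [← b.coord_apply, ← flip_apply_basis_eq_coord b hb hj, flip_apply, mem_ker.1 hv,
        LinearMap.zero_apply]
    refine mem_span_singleton.2 ⟨b.repr v i₀, b.ext_elem fun j => ?_⟩
    by_cases hj : j = i₀
    · simp [hj]
    · simp [hcoord j hj, Ne.symm hj]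
  · rw [span_singleton_le_iff_mem, mem_ker]
    exact b.ext fun j => by simp [hb]

end DegenerateOrthonormalBasis

end

theorem exists_unique_spatial_projection_field_general
    (V : Type*) [AddCommGroup V] [Module ℝ V]
    (hdim : Module.finrank ℝ V = 4)
    (h : V →ₗ[ℝ] V →ₗ[ℝ] ℝ)
    (hsig : IsSig0111 h)
    (ξ : V) (hξ : h ξ = 0)
    (t : Module.Dual ℝ V) (htξ : t ξ = 1) :
    ∃! hhat : Module.Dual ℝ V →ₗ[ℝ] Module.Dual ℝ V →ₗ[ℝ] ℝ,
      (∀ σ τ, hhat σ τ = hhat τ σ) ∧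
      (∀ σ, hhat t σ = 0) ∧
      (∀ (v : V) (σ : Module.Dual ℝ V), hhat (h v) σ = σ v - t v * σ ξ) := by
  obtain ⟨ζ, hζ, hζh⟩ := hsig
  have : FiniteDimensional ℝ V := Module.finite_of_finrank_eq_succ hdim
  let b := basisOfLinearIndependentOfCardEqFinrank hζ (by simp [hdim])
  have hb : ∀ i j, h (b i) (b j) = if i = j ∧ i ≠ 0 then 1 else 0 := by
    simpa [b] using hζh
  have hker : ker h = ℝ ∙ ξ :=
    eq_span_singleton_of_mem_of_finrank_eq_one
      (by rw [ker_eq_span_basis b hb, finrank_span_singleton (b.ne_zero 0)])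
      (mem_ker.2 hξ) (by rintro rfl; simp at htξ)
  exact existsUnique_dual_form_of_ker_eq_span (isSymm_of_basis b hb) hker htξ

/-- Proposition 2, pointwise: given a unit timelike covector t (t ξ = 1), there
is a unique symmetric bilinear form ĥ on V* with ĥ(t,·)=0 and
h_{ab} ĥ^{bc} = δ^c_a − t_a ξ^c, the latter stated as
ĥ(h(v,·), σ) = σ(v) − t(v)·σ(ξ) for all v ∈ V, σ ∈ V*. -/
theorem exists_unique_spatial_projection_field
    (V : Type*) [AddCommGroup V] [Module ℝ V]
    (hdim : Module.finrank ℝ V = 4)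
    (h : V →ₗ[ℝ] V →ₗ[ℝ] ℝ)
    (hsymm : ∀ v w, h v w = h w v)
    (hsig : IsSig0111 h)
    (ξ : V) (hξ0 : ξ ≠ 0) (hξ : h ξ = 0)
    (t : Module.Dual ℝ V) (htξ : t ξ = 1) :
    ∃! hhat : Module.Dual ℝ V →ₗ[ℝ] Module.Dual ℝ V →ₗ[ℝ] ℝ,
      (∀ σ τ, hhat σ τ = hhat τ σ) ∧
      (∀ σ, hhat t σ = 0) ∧
      (∀ (v : V) (σ : Module.Dual ℝ V), hhat (h v) σ = σ v - t v * σ ξ) :=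
  exists_unique_spatial_projection_field_general V hdim h hsig ξ hξ t htξ
end

section
/- Let V be a 4-dimensional real vector space with nondegenerate-on-quotient symmetric form h whose radical is spanned by ξ ≠ 0. Suppose C : V × V → V is a symmetric bilinear map (C^a_{bc} = C^a_{cb}) satisfying: (i) C(v,ξ) = 0 for all v ∈ V, and (ii) h(C(v,w),u) + h(C(v,u),w) = 0 for all u,v,w ∈ V. Then h(C(v,w),u) = 0 for all u,v,w ∈ V; consequently, fixing t ∈ V* with t(ξ)=1, C(v,w) = κ(h(v,·),h(w,·))·ξ where κ is the symmetric bilinear form on V* defined by κ(α,β) = t(C(v',w')) for any v',w' with appropriate projections. In particular C(v,w) is always a multiple of ξ. -/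
/-! A trilinear form symmetric in its first two arguments and antisymmetric in its last two
vanishes: the two symmetries generate all of `S₃`, and they assign the transposition `(a c)`
both signs. Applied to `h (C v w) u` this shows that `C` takes values in the radical `ℝ ξ`
of `h`; as `C` also kills `ξ`, the coefficient `t (C v w)` depends only on `h v` and `h w`,
which gives `κ` through any linear section of `h` over its range. -/

theorem eq_zero_of_symm_of_antisymm {α M : Type*} [AddCommGroup M] [IsAddTorsionFree M]
    {f : α → α → α → M} (hsymm : ∀ a b c, f a b c = f b a c)
    (hanti : ∀ a b c, f a b c = -f a c b) (a b c : α) : f a b c = 0 := by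
  have : f a b c = -f a b c := calc
    f a b c = -f a c b := hanti a b c
    _ = -f c a b := by rw [hsymm]
    _ = f c b a := by rw [hanti, neg_neg]
    _ = f b c a := hsymm c b a
    _ = -f b a c := hanti b c a
    _ = -f a b c := by rw [hsymm]
  exact self_eq_neg.mp this

theorem LinearMap.exists_apply_apply_apply_eq {K V W : Type*} [DivisionRing K]
    [AddCommGroup V] [Module K V] [AddCommGroup W] [Module K W] (f : V →ₗ[K] W) :
    ∃ g : W →ₗ[K] V, ∀ v, f (g (f v)) = f v := by
  obtain ⟨q, hq⟩ := (range f).subtype.exists_leftInverse_of_injective (range f).ker_subtype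
  obtain ⟨p, hp⟩ := f.rangeRestrict.exists_rightInverse_of_surjective f.range_rangeRestrict
  refine ⟨p ∘ₗ q, fun v => ?_⟩
  have hqf : q (f v) = f.rangeRestrict v := congr($hq (f.rangeRestrict v))
  simpa [hqf] using congr(((($hp (f.rangeRestrict v)) : range f) : W))

theorem LinearMap.apply_eq_apply_of_ker_null {R M N P : Type*} [CommRing R]
    [AddCommGroup M] [Module R M] [AddCommGroup N] [Module R N] [AddCommGroup P] [Module R P]
    (C : M →ₗ[R] M →ₗ[R] N) (h : M →ₗ[R] P)
    (hC : ∀ x, h x = 0 → ∀ w, C x w = 0 ∧ C w x = 0)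
    {v v' w w' : M} (hv : h v = h v') (hw : h w = h w') : C v w = C v' w' := by
  have hv0 : h (v - v') = 0 := by rw [map_sub, hv, sub_self]
  have hw0 : h (w - w') = 0 := by rw [map_sub, hw, sub_self]
  calc C v w = C (v - v') w + C v' (w - w') + C v' w' := by simp
    _ = C v' w' := by rw [(hC _ hv0 w).1, (hC _ hw0 v').2, zero_add, zero_add]

theorem difference_tensor_form_general
    (V : Type*) [AddCommGroup V] [Module ℝ V]
    (h : V →ₗ[ℝ] V →ₗ[ℝ] ℝ)
    (ξ : V)
    -- the radical of h is spanned by ξ: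
    (hrad : ∀ v : V, h v = 0 ↔ ∃ α : ℝ, v = α • ξ)
    (t : Module.Dual ℝ V) (htξ : t ξ = 1)
    (C : V →ₗ[ℝ] V →ₗ[ℝ] V)
    (hCsymm : ∀ v w, C v w = C w v)
    (hC1 : ∀ v, C v ξ = 0)
    (hC2 : ∀ u v w, h (C v w) u + h (C v u) w = 0) :
    (∀ u v w, h (C v w) u = 0) ∧
    (∃ κ : Module.Dual ℝ V →ₗ[ℝ] Module.Dual ℝ V →ₗ[ℝ] ℝ,
      (∀ σ τ, κ σ τ = κ τ σ) ∧
      (∀ v w, C v w = κ (h v) (h w) • ξ)) ∧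
    (∀ v w, ∃ α : ℝ, C v w = α • ξ) := by
  have hlow : ∀ u v w, h (C v w) u = 0 := fun u v w =>
    eq_zero_of_symm_of_antisymm (f := fun v w u => h (C v w) u)
      (fun a b c => by rw [hCsymm]) (fun a b c => eq_neg_of_add_eq_zero_left (hC2 c a b)) v w u
  have hmul : ∀ v w, C v w = t (C v w) • ξ := fun v w => by
    obtain ⟨α, hα⟩ := (hrad _).mp (LinearMap.ext fun u => hlow u v w)
    rw [hα, map_smul, htξ, smul_eq_mul, mul_one]
  have hker : ∀ x, h x = 0 → ∀ w, C x w = 0 ∧ C w x = 0 := by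
    intro x hx w
    obtain ⟨α, rfl⟩ := (hrad x).mp hx
    simp [hC1, hCsymm _ w]
  obtain ⟨s, hs⟩ := h.exists_apply_apply_apply_eq
  refine ⟨hlow, ⟨(C.compr₂ t).compl₁₂ s s, fun σ τ => ?_, fun v w => ?_⟩,
    fun v w => ⟨_, hmul v w⟩⟩
  · simp [hCsymm (s σ)]
  · rw [hmul v w]
    simp [C.apply_eq_apply_of_ker_null h hker (hs v) (hs w)]

/-- Proposition 4, core computation: a symmetric bilinear map C (the difference
tensor between two Carroll-compatible derivative operators) satisfying
C(v,ξ)=0 and h(C(v,w),u) + h(C(v,u),w) = 0 has vanishing lowered components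
h(C(v,w),u), and hence takes the form C(v,w) = κ(h(v,·),h(w,·))·ξ for a
symmetric bilinear form κ on V*; in particular C(v,w) is always a multiple of ξ. -/
theorem difference_tensor_form
    (V : Type*) [AddCommGroup V] [Module ℝ V]
    (hdim : Module.finrank ℝ V = 4)
    (h : V →ₗ[ℝ] V →ₗ[ℝ] ℝ)
    (hsymm : ∀ v w, h v w = h w v)
    (ξ : V) (hξ0 : ξ ≠ 0)
    -- the radical of h is spanned by ξ:
    (hrad : ∀ v : V, h v = 0 ↔ ∃ α : ℝ, v = α • ξ)
    (t : Module.Dual ℝ V) (htξ : t ξ = 1)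
    (C : V →ₗ[ℝ] V →ₗ[ℝ] V)
    (hCsymm : ∀ v w, C v w = C w v)
    (hC1 : ∀ v, C v ξ = 0)
    (hC2 : ∀ u v w, h (C v w) u + h (C v u) w = 0) :
    (∀ u v w, h (C v w) u = 0) ∧
    (∃ κ : Module.Dual ℝ V →ₗ[ℝ] Module.Dual ℝ V →ₗ[ℝ] ℝ,
      (∀ σ τ, κ σ τ = κ τ σ) ∧
      (∀ v w, C v w = κ (h v) (h w) • ξ)) ∧
    (∀ v w, ∃ α : ℝ, C v w = α • ξ) :=
  difference_tensor_form_general V h ξ hrad t htξ C hCsymm hC1 hC2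
end

section
/- Let (M, h, ξ, ∇) be a Carroll spacetime and suppose t is a covector field with t(ξ) = 1 and ∇t = 0. Suppose further that the spacetime is spatially flat, i.e. R_{abcd} := h_{an}R^n_{bcd} = 0. Then the full curvature tensor vanishes: R^a_{bcd} = 0. -/
/-! Global-chart formulation; 'if' direction of Proposition 7: a spatially
flat Carroll spacetime admitting a parallel unit timelike covector field is
flat. -/

abbrev Vec4 : Type := Fin 4 → ℝ

noncomputable def pd (f : Vec4 → ℝ) (x : Vec4) (b : Fin 4) : ℝ :=
  fderiv ℝ f x (Pi.single b 1)

/-- ∇_b v^a -/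
noncomputable def covVec (Γ : Vec4 → Fin 4 → Fin 4 → Fin 4 → ℝ)
    (v : Vec4 → Vec4) (x : Vec4) (b a : Fin 4) : ℝ :=
  pd (fun y => v y a) x b + ∑ n, Γ x a b n * v x n

/-- ∇_b t_a (covector field) -/
noncomputable def covCov (Γ : Vec4 → Fin 4 → Fin 4 → Fin 4 → ℝ)
    (t : Vec4 → Vec4) (x : Vec4) (b a : Fin 4) : ℝ :=
  pd (fun y => t y a) x b - ∑ n, Γ x n b a * t x n

/-- ∇_c h_{ab} -/
noncomputable def covH (Γ : Vec4 → Fin 4 → Fin 4 → Fin 4 → ℝ)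
    (h : Vec4 → Fin 4 → Fin 4 → ℝ) (x : Vec4) (c a b : Fin 4) : ℝ :=
  pd (fun y => h y a b) x c - ∑ n, Γ x n c a * h x n b - ∑ n, Γ x n c b * h x a n

/-- R^a_{bcd} -/
noncomputable def riem (Γ : Vec4 → Fin 4 → Fin 4 → Fin 4 → ℝ)
    (x : Vec4) (a b c d : Fin 4) : ℝ :=
  pd (fun y => Γ y a c b) x d - pd (fun y => Γ y a d b) x c
  + ∑ n, (Γ x a d n * Γ x n c b - Γ x a c n * Γ x n d b)

/- ### Auxiliary lemmas -/

lemma pd_congr {f g : Vec4 → ℝ} (h : ∀ y, f y = g y) (x : Vec4) (b : Fin 4) :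
    pd f x b = pd g x b := by
  have : f = g := funext h
  rw [this]

lemma pd_sum {f : Fin 4 → Vec4 → ℝ} (hf : ∀ n, Differentiable ℝ (f n)) (x : Vec4) (b : Fin 4) :
    pd (fun y => ∑ n, f n y) x b = ∑ n, pd (f n) x b := by
  unfold pd
  rw [fderiv_fun_sum (fun i _ => (hf i).differentiableAt)]
  simp

lemma pd_mul {f g : Vec4 → ℝ} (hf : Differentiable ℝ f) (hg : Differentiable ℝ g)
    (x : Vec4) (b : Fin 4) :
    pd (fun y => f y * g y) x b = pd f x b * g x + f x * pd g x b := by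
  unfold pd
  rw [fderiv_fun_mul (hf x) (hg x)]
  simp [mul_comm]
  ring

/-- Symmetry of second partial derivatives for smooth functions. -/
lemma pd_symm {f : Vec4 → ℝ} (hf : ContDiff ℝ (⊤ : ℕ∞) f) (x : Vec4) (c d : Fin 4) :
    pd (fun y => pd f y c) x d = pd (fun y => pd f y d) x c := by
  unfold pd
  have hdf : Differentiable ℝ (fderiv ℝ f) :=
    (hf.fderiv_right (m := 1) ((by exact WithTop.coe_le_coe.mpr le_top))).differentiable one_ne_zero
  have key : ∀ v w : Vec4,
      fderiv ℝ (fun y => fderiv ℝ f y v) x w = fderiv ℝ (fderiv ℝ f) x w v := by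
    intro v w
    rw [fderiv_clm_apply (hdf x) (differentiableAt_const v)]
    simp
  rw [key, key]
  exact second_derivative_symmetric (f := f) (fun y => ((hf.differentiable (by simp)) y).hasFDerivAt)
    (hdf x).hasFDerivAt _ _

/-- Ricci identity applied to a parallel covector field: t_n R^n_{bcd} = 0. -/
lemma ricci_parallel (Γ : Vec4 → Fin 4 → Fin 4 → Fin 4 → ℝ)
    (hΓsm : ∀ a b c, ContDiff ℝ (⊤ : ℕ∞) fun x => Γ x a b c)
    (t : Vec4 → Vec4) (htsm : ∀ a, ContDiff ℝ (⊤ : ℕ∞) fun x => t x a)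
    (hpt : ∀ x b a, covCov Γ t x b a = 0) :
    ∀ x b c d, ∑ n, t x n * riem Γ x n b c d = 0 := by
  intro x b c d
  have dΓ : ∀ n e a, Differentiable ℝ fun y => Γ y n e a :=
    fun n e a => (hΓsm n e a).differentiable (by simp)
  have dt : ∀ n, Differentiable ℝ fun y => t y n :=
    fun n => (htsm n).differentiable (by simp)
  have hkey : ∀ (y : Vec4) (e n : Fin 4),
      pd (fun z => t z n) y e = ∑ m, Γ y m e n * t y m := by
    intro y e n
    have := hpt y e n
    unfold covCov at this
    linarith
  have expand : ∀ e e' : Fin 4, pd (fun y => pd (fun z => t z b) y e) x e' =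
      ∑ n, (pd (fun y => Γ y n e b) x e' * t x n
        + Γ x n e b * ∑ m, Γ x m e' n * t x m) := by
    intro e e'
    rw [pd_congr (fun y => hkey y e b)]
    rw [pd_sum (f := fun n y => Γ y n e b * t y n) (fun n => (dΓ n e b).mul (dt n))]
    apply Finset.sum_congr rfl
    intro n _
    rw [pd_mul (dΓ n e b) (dt n), hkey]
  have hsymm := pd_symm (htsm b) x c d
  rw [expand c d, expand d c] at hsymm
  simp only [riem, Fin.sum_univ_four] at hsymm ⊢
  linear_combination hsymm

/-- If ζ diagonalizes H with signature (0,1,1,1) and w = ∑ cᵢ ζᵢ lies in the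
kernel of H, then all coefficients except c₀ vanish. -/
lemma ker_coeff (H : Fin 4 → Fin 4 → ℝ) (ζ : Fin 4 → Vec4)
    (hζ : ∀ i j, ∑ a, ∑ b, H a b * ζ i a * ζ j b = if i = j ∧ i ≠ 0 then 1 else 0)
    (c : Fin 4 → ℝ)
    (hw : ∀ a, ∑ n, H a n * (∑ i, c i * ζ i n) = 0) :
    ∀ j, j ≠ 0 → c j = 0 := by
  have e0 := hw 0; have e1 := hw 1; have e2 := hw 2; have e3 := hw 3
  simp only [Fin.sum_univ_four] at e0 e1 e2 e3
  intro j hj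
  fin_cases j
  · exact absurd rfl hj
  · show c 1 = 0
    have s0 := hζ 1 0; have s1 := hζ 1 1; have s2 := hζ 1 2; have s3 := hζ 1 3
    simp only [Fin.sum_univ_four, show ((1:Fin 4) = 0 ↔ False) from by decide, show ((2:Fin 4) = 0 ↔ False) from by decide, show ((3:Fin 4) = 0 ↔ False) from by decide, show ((1:Fin 4) = 2 ↔ False) from by decide, show ((1:Fin 4) = 3 ↔ False) from by decide, show ((2:Fin 4) = 1 ↔ False) from by decide, show ((2:Fin 4) = 3 ↔ False) from by decide, show ((3:Fin 4) = 1 ↔ False) from by decide, show ((3:Fin 4) = 2 ↔ False) from by decide, ne_eq, not_false_iff, and_true, true_and, false_and, and_false, if_true, if_false, if_neg, not_true, not_false_eq_true] at s0 s1 s2 s3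
    linear_combination ζ 1 0 * e0 + ζ 1 1 * e1 + ζ 1 2 * e2 + ζ 1 3 * e3
      - c 0 * s0 - c 1 * s1 - c 2 * s2 - c 3 * s3
  · show c 2 = 0
    have s0 := hζ 2 0; have s1 := hζ 2 1; have s2 := hζ 2 2; have s3 := hζ 2 3
    simp only [Fin.sum_univ_four, show ((1:Fin 4) = 0 ↔ False) from by decide, show ((2:Fin 4) = 0 ↔ False) from by decide, show ((3:Fin 4) = 0 ↔ False) from by decide, show ((1:Fin 4) = 2 ↔ False) from by decide, show ((1:Fin 4) = 3 ↔ False) from by decide, show ((2:Fin 4) = 1 ↔ False) from by decide, show ((2:Fin 4) = 3 ↔ False) from by decide, show ((3:Fin 4) = 1 ↔ False) from by decide, show ((3:Fin 4) = 2 ↔ False) from by decide, ne_eq, not_false_iff, and_true, true_and, false_and, and_false, if_true, if_false, if_neg, not_true, not_false_eq_true] at s0 s1 s2 s3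
    linear_combination ζ 2 0 * e0 + ζ 2 1 * e1 + ζ 2 2 * e2 + ζ 2 3 * e3
      - c 0 * s0 - c 1 * s1 - c 2 * s2 - c 3 * s3
  · show c 3 = 0
    have s0 := hζ 3 0; have s1 := hζ 3 1; have s2 := hζ 3 2; have s3 := hζ 3 3
    simp only [Fin.sum_univ_four, show ((1:Fin 4) = 0 ↔ False) from by decide, show ((2:Fin 4) = 0 ↔ False) from by decide, show ((3:Fin 4) = 0 ↔ False) from by decide, show ((1:Fin 4) = 2 ↔ False) from by decide, show ((1:Fin 4) = 3 ↔ False) from by decide, show ((2:Fin 4) = 1 ↔ False) from by decide, show ((2:Fin 4) = 3 ↔ False) from by decide, show ((3:Fin 4) = 1 ↔ False) from by decide, show ((3:Fin 4) = 2 ↔ False) from by decide, ne_eq, not_false_iff, and_true, true_and, false_and, and_false, if_true, if_false, if_neg, not_true, not_false_eq_true] at s0 s1 s2 s3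
    linear_combination ζ 3 0 * e0 + ζ 3 1 * e1 + ζ 3 2 * e2 + ζ 3 3 * e3
      - c 0 * s0 - c 1 * s1 - c 2 * s2 - c 3 * s3

/-- If a Carroll spacetime is spatially flat (h_{an} R^n_{bcd} = 0) and admits
a covector field t with t(ξ) = 1 and ∇t = 0, then R^a_{bcd} = 0. -/
theorem spatially_flat_with_parallel_clock_is_flat
    (Γ : Vec4 → Fin 4 → Fin 4 → Fin 4 → ℝ)
    (hΓsm : ∀ a b c, ContDiff ℝ (⊤ : ℕ∞) fun x => Γ x a b c)
    (hΓsymm : ∀ x a b c, Γ x a b c = Γ x a c b)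
    (ξ : Vec4 → Vec4) (hξsm : ∀ a, ContDiff ℝ (⊤ : ℕ∞) fun x => ξ x a)
    (hξ0 : ∀ x, ξ x ≠ 0)
    (h : Vec4 → Fin 4 → Fin 4 → ℝ) (hhsm : ∀ a b, ContDiff ℝ (⊤ : ℕ∞) fun x => h x a b)
    (hhsymm : ∀ x a b, h x a b = h x b a)
    -- h has signature (0,1,1,1) at each point:
    (hsig : ∀ x, ∃ ζ : Fin 4 → Vec4, LinearIndependent ℝ ζ ∧
      ∀ i j, ∑ a, ∑ b, h x a b * ζ i a * ζ j b = if i = j ∧ i ≠ 0 then 1 else 0)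
    (horth : ∀ x a, ∑ b, h x a b * ξ x b = 0)
    (hcompatξ : ∀ x b a, covVec Γ ξ x b a = 0)
    (hcompath : ∀ x c a b, covH Γ h x c a b = 0)
    (t : Vec4 → Vec4) (htsm : ∀ a, ContDiff ℝ (⊤ : ℕ∞) fun x => t x a)
    (htξ : ∀ x, ∑ a, t x a * ξ x a = 1)
    (hpt : ∀ x b a, covCov Γ t x b a = 0)  -- ∇t = 0
    (hspatflat : ∀ x a b c d, ∑ n, h x a n * riem Γ x n b c d = 0) :
    ∀ x a b c d, riem Γ x a b c d = 0 := by
  intro x a b c d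
  obtain ⟨ζ, hLI, hζ⟩ := hsig x
  have hcard : Fintype.card (Fin 4) = Module.finrank ℝ Vec4 := by
    simp [Module.finrank_fintype_fun_eq_card]
  let B := basisOfLinearIndependentOfCardEqFinrank hLI hcard
  have hB : ∀ i, B i = ζ i := fun i => by
    rw [show B = _ from rfl, coe_basisOfLinearIndependentOfCardEqFinrank hLI hcard]
  have repr_expand : ∀ (w : Vec4) (n : Fin 4), w n = ∑ i, B.repr w i * ζ i n := by
    intro w n
    conv_lhs => rw [show w = ∑ i, B.repr w i • B i from (B.sum_repr w).symm]
    simp [Finset.sum_apply, hB]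
  -- the ξ direction
  set cξ : Fin 4 → ℝ := fun i => B.repr (ξ x) i with hcξdef
  have hξexp : ∀ n, ξ x n = ∑ i, cξ i * ζ i n := fun n => repr_expand (ξ x) n
  have hξker : ∀ aa, ∑ n, h x aa n * (∑ i, cξ i * ζ i n) = 0 := by
    intro aa
    calc ∑ n, h x aa n * (∑ i, cξ i * ζ i n)
        = ∑ n, h x aa n * ξ x n := Finset.sum_congr rfl (fun n _ => by rw [← hξexp])
      _ = 0 := horth x aa
  have hcξz : ∀ j, j ≠ 0 → cξ j = 0 := ker_coeff (h x) ζ hζ cξ hξker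
  have hξ0exp : ∀ n, ξ x n = cξ 0 * ζ 0 n := by
    intro n
    rw [hξexp n, Fin.sum_univ_four, hcξz 1 (by decide), hcξz 2 (by decide),
      hcξz 3 (by decide)]
    ring
  -- the curvature direction
  set v : Vec4 := fun n => riem Γ x n b c d with hvdef
  set cv : Fin 4 → ℝ := fun i => B.repr v i with hcvdef
  have hvexp : ∀ n, v n = ∑ i, cv i * ζ i n := fun n => repr_expand v n
  have hvker : ∀ aa, ∑ n, h x aa n * (∑ i, cv i * ζ i n) = 0 := by
    intro aa
    calc ∑ n, h x aa n * (∑ i, cv i * ζ i n)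
        = ∑ n, h x aa n * v n := Finset.sum_congr rfl (fun n _ => by rw [← hvexp])
      _ = 0 := hspatflat x aa b c d
  have hcvz : ∀ j, j ≠ 0 → cv j = 0 := ker_coeff (h x) ζ hζ cv hvker
  have hv0exp : ∀ n, v n = cv 0 * ζ 0 n := by
    intro n
    rw [hvexp n, Fin.sum_univ_four, hcvz 1 (by decide), hcvz 2 (by decide),
      hcvz 3 (by decide)]
    ring
  -- contract with t
  have htv : ∑ n, t x n * v n = 0 := ricci_parallel Γ hΓsm t htsm hpt x b c d
  set S : ℝ := ∑ n, t x n * ζ 0 n with hSdef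
  have h1 : cξ 0 * S = 1 := by
    rw [← htξ x]
    rw [hSdef, Finset.mul_sum]
    apply Finset.sum_congr rfl
    intro n _
    rw [hξ0exp n]
    ring
  have h2 : cv 0 * S = 0 := by
    rw [← htv, hSdef, Finset.mul_sum]
    apply Finset.sum_congr rfl
    intro n _
    rw [hv0exp n]
    ring
  have hSne : S ≠ 0 := by
    intro hS
    rw [hS, mul_zero] at h1
    exact zero_ne_one h1
  have hcv0 : cv 0 = 0 := by
    rcases mul_eq_zero.mp h2 with h' | h'
    · exact h'
    · exact absurd h' hSne
  have : v a = 0 := by rw [hv0exp a, hcv0, zero_mul]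
  exact this
end

section
/- Let (M,h,ξ,∇) be a Carroll spacetime and T^{ab} a symmetric (2,0)-tensor field, and suppose at each point p that T satisfies the strengthened dominant Carroll energy condition: for every covector μ at p with μ(ξ) ≠ 0, T(μ,μ) ≥ 0 and the vector T(μ,·) (i.e. μ_n T^{na}) is a multiple of ξ; then T^{ab} = ρ ξ^a ξ^b for some nonnegative scalar ρ. -/
/-- Pointwise linear-algebra version of the strengthened dominant Carroll
energy condition forcing the dust form: if for every covector μ with
μ(ξ) ≠ 0 we have T(μ,μ) ≥ 0 and (T = 0 or T(μ,·)† ∈ span{ξ}), then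
T = ρ ξ⊗ξ with ρ ≥ 0. -/
theorem strengthened_dominant_energy_condition_dust
    (V : Type*) [AddCommGroup V] [Module ℝ V]
    (hdim : Module.finrank ℝ V = 4)
    (ξ : V) (hξ0 : ξ ≠ 0)
    (T : Module.Dual ℝ V →ₗ[ℝ] Module.Dual ℝ V →ₗ[ℝ] ℝ)
    (hTsymm : ∀ μ σ, T μ σ = T σ μ)
    (hEC : ∀ μ : Module.Dual ℝ V, μ ξ ≠ 0 →
      0 ≤ T μ μ ∧
      (T = 0 ∨ ∃ α : ℝ, ∀ σ : Module.Dual ℝ V, T μ σ = α * σ ξ)) :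
    ∃ ρ : ℝ, 0 ≤ ρ ∧ ∀ μ σ : Module.Dual ℝ V, T μ σ = ρ * μ ξ * σ ξ := by
  have hfd : FiniteDimensional ℝ V := FiniteDimensional.of_finrank_pos (by omega)
  -- find t with t ξ = 1
  obtain ⟨f, hf⟩ : ∃ f : Module.Dual ℝ V, f ξ ≠ 0 := by
    by_contra h
    push_neg at h
    exact hξ0 ((Module.forall_dual_apply_eq_zero_iff ℝ ξ).mp h)
  set t : Module.Dual ℝ V := (f ξ)⁻¹ • f with ht
  have htξ : t ξ = 1 := by simp [ht, inv_mul_cancel₀ hf]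
  have htξ' : t ξ ≠ 0 := by rw [htξ]; norm_num
  obtain ⟨hpos, hcases⟩ := hEC t htξ'
  rcases hcases with hT0 | ⟨α, hα⟩
  · exact ⟨0, le_refl 0, fun μ σ => by simp [hT0]⟩
  · refine ⟨α, ?_, ?_⟩
    · have := hα t
      rw [htξ, mul_one] at this
      linarith [hpos, this]
    · -- key: for μ with μ ξ ≠ 0, T μ σ = (T μ t) * σ ξ and T μ t = α * μ ξ
      have key : ∀ μ : Module.Dual ℝ V, μ ξ ≠ 0 → ∀ σ, T μ σ = α * μ ξ * σ ξ := by
        intro μ hμ σ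
        obtain ⟨_, hc⟩ := hEC μ hμ
        rcases hc with hT0 | ⟨β, hβ⟩
        · have := hα σ; simp [hT0] at this ⊢
          rcases this with h | h
          · simp [h]
          · simp [h]
        · have hβα : β = α * μ ξ := by
            have h1 := hβ t
            rw [htξ, mul_one] at h1
            have h2 := hα μ
            rw [hTsymm μ t] at h1
            rw [h1] at h2
            linarith [h2]
          rw [hβ σ, hβα]
      intro μ σ
      by_cases hμ : μ ξ ≠ 0
      · exact key μ hμ σ
      · push_neg at hμ
        have h1 : (μ + t) ξ ≠ 0 := by simp [hμ, htξ]
        have h2 := key (μ + t) h1 σ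
        have h3 := key t htξ' σ
        simp only [map_add, LinearMap.add_apply, hμ, htξ] at h2 h3 ⊢
        rw [h3] at h2
        simp at h2 ⊢
        linarith
end
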